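/- Define the Wilson polynomial by W_n(x^2; a,b,c,d) = (a+b)_n (a+c)_n (a+d)_n \sum_{k=0}^n ((-n)_k (n+a+b+c+d-1)_k (a+ix)_k (a-ix)_k)/((a+b)_k (a+c)_k (a+d)_k k!). Then W_n(x^2; a,b,c,d) = ((n+a+b+c+d-1)/(2n+a+b+c+d-1)) W_n(x^2; a,b,c,d+1) - (n(n+a+b-1)(n+a+c-1)(n+b+c-1)/(2n+a+b+c+d-1)) W_{n-1}(x^2; a,b,c,d+1). -/

import Mathlib

/-!
Clearing the denominators `(y)_k` against `(y)_n = (y)_k (y + k)_{n-k}` turns each Wilson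
polynomial into a sum whose `k`-th terms, for the three polynomials of the recurrence, differ only
by a few linear factors. After cancelling the common product, the `k`-th terms satisfy
`(σ + n)(E + k) = (σ + k)(E + n) - (n - k)(σ - E)` with `σ = n + a + b + c + d - 1` and
`E = a + d`, an identity of linear polynomials.
-/

open Finset Complex

noncomputable def poch (a : ℂ) (k : ℕ) : ℂ := (ascPochhammer ℂ k).eval a

/-- Wilson polynomial `W_n(x²; a,b,c,d)` as a function of `x`, as the terminating ₄F₃ sum
times `(a+b)_n (a+c)_n (a+d)_n`. -/
noncomputable def wilson (n : ℕ) (x a b c d : ℂ) : ℂ :=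
  poch (a + b) n * poch (a + c) n * poch (a + d) n *
    ∑ k ∈ range (n + 1),
      poch (-(n : ℂ)) k * poch ((n : ℂ) + a + b + c + d - 1) k * poch (a + I * x) k *
          poch (a - I * x) k /
        (poch (a + b) k * poch (a + c) k * poch (a + d) k * (k.factorial : ℂ))

lemma poch_zero (y : ℂ) : poch y 0 = 1 := by simp [poch]

lemma poch_succ_right (y : ℂ) (m : ℕ) : poch y (m + 1) = poch y m * (y + m) :=
  ascPochhammer_succ_eval m y

lemma poch_succ_left (y : ℂ) (m : ℕ) : poch y (m + 1) = y * poch (y + 1) m := by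
  simp [poch, ascPochhammer_succ_left]

lemma poch_add (y : ℂ) (k l : ℕ) : poch y (k + l) = poch y k * poch (y + k) l := by
  simp only [poch, ← ascPochhammer_mul, Polynomial.eval_mul, Polynomial.eval_comp,
    Polynomial.eval_add, Polynomial.eval_X, Polynomial.eval_natCast]

lemma poch_eq_mul_poch_sub (y : ℂ) {k n : ℕ} (hk : k ≤ n) :
    poch y n = poch y k * poch (y + k) (n - k) := by
  rw [← poch_add, Nat.add_sub_cancel' hk]

lemma mul_poch_add_one (y : ℂ) (k : ℕ) : y * poch (y + 1) k = poch y k * (y + k) := by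
  rw [← poch_succ_left, poch_succ_right]

lemma add_one_mul_poch_neg (z : ℂ) (k : ℕ) :
    (z + 1) * poch (-z) k = (z + 1 - k) * poch (-(z + 1)) k := by
  induction k with
  | zero => simp [poch_zero]
  | succ k ih =>
    rw [poch_succ_right, poch_succ_right]
    push_cast
    linear_combination (k - z) * ih

noncomputable def wilsonSummand (n : ℕ) (σ A C E u v : ℂ) (k : ℕ) : ℂ :=
  poch (-(n : ℂ)) k * poch σ k * poch u k * poch v k / k.factorial *
    (poch (A + k) (n - k) * poch (C + k) (n - k) * poch (E + k) (n - k))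

noncomputable def wilsonSum (n : ℕ) (σ A C E u v : ℂ) : ℂ :=
  ∑ k ∈ range (n + 1), wilsonSummand n σ A C E u v k

lemma wilson_eq_wilsonSum {n : ℕ} {x a b c d : ℂ}
    (hb : ∀ k ≤ n, poch (a + b) k ≠ 0) (hc : ∀ k ≤ n, poch (a + c) k ≠ 0)
    (hd : ∀ k ≤ n, poch (a + d) k ≠ 0) :
    wilson n x a b c d =
      wilsonSum n ((n : ℂ) + a + b + c + d - 1) (a + b) (a + c) (a + d) (a + I * x) (a - I * x) := by
  rw [wilson, wilsonSum, mul_sum]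
  refine sum_congr rfl fun k hk => ?_
  have hk : k ≤ n := Nat.lt_add_one_iff.mp (mem_range.mp hk)
  have := hb k hk
  have := hc k hk
  have := hd k hk
  rw [wilsonSummand, poch_eq_mul_poch_sub (a + b) hk, poch_eq_mul_poch_sub (a + c) hk,
    poch_eq_mul_poch_sub (a + d) hk]
  field_simp

section Recurrence

variable (σ A C E u v : ℂ)

lemma wilsonSummand_recurrence {m k : ℕ} (hk : k ≤ m) :
    (σ + (m + 1)) * wilsonSummand (m + 1) σ A C E u v k =
      σ * wilsonSummand (m + 1) (σ + 1) A C (E + 1) u v k -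
        (m + 1) * (A + m) * (C + m) * (σ - E) * wilsonSummand m σ A C (E + 1) u v k := by
  obtain ⟨j, rfl⟩ := Nat.exists_eq_add_of_le hk
  have hσ := mul_poch_add_one σ k
  have hn := add_one_mul_poch_neg ((k + j : ℕ) : ℂ) k
  have hE : poch (E + k) (j + 1) = (E + k) * poch (E + 1 + k) j := by
    rw [poch_succ_left, add_right_comm]
  have hj : k + j + 1 - k = j + 1 := by omega
  simp only [wilsonSummand, Nat.add_sub_cancel_left, hj,
    poch_succ_right (A + k), poch_succ_right (C + k), poch_succ_right (E + 1 + k), hE]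
  push_cast at hn ⊢
  linear_combination
    -(poch (-(k + j + 1 : ℂ)) k * poch u k * poch v k / k.factorial *
        (poch (A + k) j * (A + k + j)) * (poch (C + k) j * (C + k + j)) *
        (poch (E + 1 + k) j * (E + 1 + k + j))) * hσ +
      ((A + (k + j)) * (C + (k + j)) * (σ - E) * poch σ k * poch u k * poch v k /
          k.factorial * poch (A + k) j * poch (C + k) j * poch (E + 1 + k) j) * hn

lemma wilsonSummand_recurrence_top (m : ℕ) :
    (σ + (m + 1)) * wilsonSummand (m + 1) σ A C E u v (m + 1) =
      σ * wilsonSummand (m + 1) (σ + 1) A C (E + 1) u v (m + 1) := by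
  have hσ := mul_poch_add_one σ (m + 1)
  simp only [wilsonSummand, Nat.sub_self, poch_zero, mul_one]
  push_cast at hσ ⊢
  linear_combination
    (-(poch (-(m + 1 : ℂ)) (m + 1) * poch u (m + 1) * poch v (m + 1) / (m + 1).factorial)) * hσ

theorem wilsonSum_recurrence (m : ℕ) :
    (σ + (m + 1)) * wilsonSum (m + 1) σ A C E u v =
      σ * wilsonSum (m + 1) (σ + 1) A C (E + 1) u v -
        (m + 1) * (A + m) * (C + m) * (σ - E) * wilsonSum m σ A C (E + 1) u v := by
  rw [wilsonSum, wilsonSum, wilsonSum, sum_range_succ _ (m + 1), sum_range_succ _ (m + 1),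
    mul_add, mul_add σ, mul_sum, mul_sum, mul_sum, sum_congr rfl fun k hk =>
      wilsonSummand_recurrence σ A C E u v (Nat.lt_add_one_iff.mp (mem_range.mp hk)),
    wilsonSummand_recurrence_top, sum_sub_distrib]
  ring

end Recurrence

theorem wilson_recurrence_1 (n : ℕ) (x a b c d : ℂ) (hn : 1 ≤ n)
    (hden : 2 * (n : ℂ) + a + b + c + d - 1 ≠ 0)
    (h1 : ∀ k ≤ n, poch (a + b) k ≠ 0) (h2 : ∀ k ≤ n, poch (a + c) k ≠ 0)
    (h3 : ∀ k ≤ n, poch (a + d) k ≠ 0) (h4 : ∀ k ≤ n, poch (a + d + 1) k ≠ 0) :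
    wilson n x a b c d =
      ((n : ℂ) + a + b + c + d - 1) / (2 * (n : ℂ) + a + b + c + d - 1) *
          wilson n x a b c (d + 1) -
        (n : ℂ) * ((n : ℂ) + a + b - 1) * ((n : ℂ) + a + c - 1) * ((n : ℂ) + b + c - 1) /
            (2 * (n : ℂ) + a + b + c + d - 1) *
          wilson (n - 1) x a b c (d + 1) := by
  obtain ⟨m, rfl⟩ := Nat.exists_eq_add_of_le' hn
  have h4' : ∀ k ≤ m + 1, poch (a + (d + 1)) k ≠ 0 := by simpa only [← add_assoc] using h4
  have below {p : ℕ → Prop} (h : ∀ k ≤ m + 1, p k) : ∀ k ≤ m, p k := fun k hk => h k (by omega)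
  rw [Nat.add_sub_cancel, wilson_eq_wilsonSum h1 h2 h3, wilson_eq_wilsonSum h1 h2 h4',
    wilson_eq_wilsonSum (below h1) (below h2) (below h4')]
  have key := wilsonSum_recurrence ((m : ℂ) + 1 + a + b + c + d - 1) (a + b) (a + c) (a + d)
    (a + I * x) (a - I * x) m
  push_cast at hden ⊢
  rw [show (m : ℂ) + 1 + a + b + c + (d + 1) - 1 = (m : ℂ) + 1 + a + b + c + d - 1 + 1 by ring,
    show (m : ℂ) + a + b + c + (d + 1) - 1 = (m : ℂ) + 1 + a + b + c + d - 1 by ring,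
    ← add_assoc a d 1, div_mul_eq_mul_div, div_mul_eq_mul_div, ← sub_div, eq_div_iff hden]
  linear_combination key
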